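/- arXiv:math/0111271 — 6 statements merged into one kernel-verified Lean document; each statement's English description precedes it below -/
import Mathlib

section
/- Let p be a prime and F a field of characteristic p. For every polynomial f ∈ F[X], there exists a constant c ∈ F such that for every h ∈ F[X], the polynomial (T_f)^p(h) − c·(f·∂h) lies in the ideal of F[X] generated by X^p, where T_f : F[X] → F[X] is the map h ↦ f·∂h and (T_f)^p denotes its p-fold iterate. (This encodes the statement that in the Witt algebra W = Der(F[X]/(X^p)), the p-th power of the derivation f∂ equals c·(f∂), i.e. (f∂)^[p] = C(f)·f∂ for a constant C(f) ∈ F.) -/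
open Polynomial

/-- In a ring of characteristic `p`, `t^p * x - x * t^p` equals the `p`-th iterate of
`y ↦ t*y - y*t` applied to `x`. -/
private lemma aux_ad_pow (p : ℕ) (hp : p.Prime) {R : Type*} [Ring R] [CharP R p] (t x : R) :
    t ^ p * x - x * t ^ p = (fun y => t * y - y * t)^[p] x := by
  haveI : Fact p.Prime := ⟨hp⟩
  haveI : CharP (Module.End ℤ R) p :=
    charP_of_injective_ringHom (f := (Algebra.lmul ℤ R).toRingHom)
      (Algebra.lmul_injective) p
  have hc : Commute (LinearMap.mulLeft ℤ t) (LinearMap.mulRight ℤ t) :=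
    LinearMap.commute_mulLeft_right t t
  have key : (LinearMap.mulLeft ℤ t - LinearMap.mulRight ℤ t) ^ p
      = LinearMap.mulLeft ℤ (t ^ p) - LinearMap.mulRight ℤ (t ^ p) := by
    rw [sub_pow_char_of_commute p hc, LinearMap.pow_mulLeft, LinearMap.pow_mulRight]
  have hfun : ⇑(LinearMap.mulLeft ℤ t - LinearMap.mulRight ℤ t)
      = fun y => t * y - y * t := by
    funext y; simp
  have h1 : ((LinearMap.mulLeft ℤ t - LinearMap.mulRight ℤ t) ^ p) x
      = t ^ p * x - x * t ^ p := by
    rw [key]; simp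
  rw [← h1, Module.End.pow_apply, hfun]

theorem witt_pth_power_is_multiple (p : ℕ) (hp : p.Prime) (F : Type*) [Field F] [CharP F p]
    (f : Polynomial F) :
    ∃ c : F, ∀ h : Polynomial F,
      (fun h : Polynomial F => f * Polynomial.derivative h)^[p] h
          - Polynomial.C c * (f * Polynomial.derivative h)
        ∈ Ideal.span {(Polynomial.X : Polynomial F) ^ p} := by
  haveI : Fact p.Prime := ⟨hp⟩
  set T : Polynomial F → Polynomial F := fun h => f * Polynomial.derivative h with hT
  -- the linear-map version of T
  set Tl : Module.End F (Polynomial F) :=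
    (LinearMap.mulLeft F f).comp (Polynomial.derivative) with hTl
  have hTfun : ⇑Tl = T := by funext h; simp [hTl, hT]
  have hiter : ∀ (n : ℕ) (h : Polynomial F), (Tl ^ n) h = T^[n] h := by
    intro n h; rw [Module.End.pow_apply, hTfun]
  -- char p of the endomorphism ring
  haveI : CharP (Module.End F (Polynomial F)) p :=
    charP_of_injective_ringHom (f := (Algebra.lmul F (Polynomial F)).toRingHom)
      (Algebra.lmul_injective) p
  -- Leibniz rule for T as a commutator identity
  have had : ∀ a : Polynomial F,
      Tl * (Algebra.lmul F (Polynomial F) a) - (Algebra.lmul F (Polynomial F) a) * Tl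
        = Algebra.lmul F (Polynomial F) (T a) := by
    intro a
    refine LinearMap.ext fun b => ?_
    simp only [LinearMap.sub_apply, Module.End.mul_apply, Algebra.coe_lmul_eq_mul,
      LinearMap.mul_apply', hTfun, hT]
    rw [Polynomial.derivative_mul]
    ring
  have hadn : ∀ (n : ℕ) (a : Polynomial F),
      (fun S => Tl * S - S * Tl)^[n] (Algebra.lmul F (Polynomial F) a)
        = Algebra.lmul F (Polynomial F) (T^[n] a) := by
    intro n
    induction n with
    | zero => intro a; simp
    | succ n ih =>
      intro a
      rw [Function.iterate_succ_apply, had a, ih (T a), Function.iterate_succ_apply]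
  -- T^[p] is a derivation
  have hder : ∀ a b : Polynomial F, T^[p] (a * b) = T^[p] a * b + a * T^[p] b := by
    intro a b
    have h1 := aux_ad_pow p hp Tl (Algebra.lmul F (Polynomial F) a)
    rw [hadn p a] at h1
    have h2 := DFunLike.congr_fun h1 b
    simp only [LinearMap.sub_apply, Module.End.mul_apply, Algebra.coe_lmul_eq_mul,
      LinearMap.mul_apply', hiter] at h2
    linear_combination h2
  -- T^[p] kills constants
  have hEC : ∀ r : F, T^[p] (Polynomial.C r) = 0 := by
    intro r
    have h0 : T (Polynomial.C r) = 0 := by simp [hT]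
    have hz : T 0 = 0 := by simp [hT]
    rw [← Nat.succ_pred_eq_of_pos hp.pos, Function.iterate_succ_apply, h0,
      Function.iterate_fixed hz]
  have hEadd : ∀ a b : Polynomial F, T^[p] (a + b) = T^[p] a + T^[p] b := by
    intro a b; rw [← hiter, ← hiter, ← hiter, map_add]
  -- the main identity : T^[p] h = (T^[p] X) * h'
  have hmain : ∀ h : Polynomial F,
      T^[p] h = T^[p] Polynomial.X * Polynomial.derivative h := by
    intro h
    induction h using Polynomial.induction_on with
    | C a => simp [hEC]
    | add q r hq hr => rw [hEadd, hq, hr, Polynomial.derivative_add]; ring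
    | monomial n a ih =>
      have hx : (Polynomial.C a * Polynomial.X ^ (n + 1))
          = (Polynomial.C a * Polynomial.X ^ n) * Polynomial.X := by ring
      rw [hx, hder, ih]
      simp only [Polynomial.derivative_mul, Polynomial.derivative_X, Polynomial.derivative_C]
      ring
  by_cases hf : f = 0
  · -- trivial case f = 0
    refine ⟨0, fun h => ?_⟩
    have hz : T 0 = 0 := by simp [hT]
    have h0 : T h = 0 := by simp [hT, hf]
    have hp0 : T^[p] h = 0 := by
      rw [← Nat.succ_pred_eq_of_pos hp.pos, Function.iterate_succ_apply, h0,
        Function.iterate_fixed hz]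
    simp only [hp0, hf, map_zero, zero_mul, mul_zero, sub_zero, zero_sub, neg_zero]
    exact Ideal.zero_mem _
  · -- main case
    set w : Polynomial F := Polynomial.derivative (T^[p - 1] Polynomial.X) with hw
    have hg : T^[p] Polynomial.X = f * w := by
      conv_lhs => rw [← Nat.succ_pred_eq_of_pos hp.pos, Function.iterate_succ_apply']
      rw [hw, hT]
      rfl
    -- commutation: f * (T^[p] X)' = (T^[p] X) * f'
    have hTX : T Polynomial.X = f := by simp [hT]
    have h1 : T (T^[p] Polynomial.X) = T^[p] (T Polynomial.X) :=
      (Function.iterate_succ_apply' T p Polynomial.X).symm.trans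
        (Function.iterate_succ_apply T p Polynomial.X)
    rw [hTX, hmain f, hg] at h1
    have h2 : f * Polynomial.derivative (f * w) = f * w * Polynomial.derivative f := h1
    rw [Polynomial.derivative_mul] at h2
    have h3 : f * f * Polynomial.derivative w = 0 := by linear_combination h2
    have hw' : Polynomial.derivative w = 0 := by
      rcases mul_eq_zero.mp h3 with h4 | h4
      · exact absurd (mul_self_eq_zero.mp h4) hf
      · exact h4
    refine ⟨w.coeff 0, fun h => ?_⟩
    have hdvd : (Polynomial.X : Polynomial F) ^ p ∣ (w - Polynomial.C (w.coeff 0)) := by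
      rw [Polynomial.X_pow_dvd_iff]
      intro d hd
      rcases Nat.eq_zero_or_pos d with rfl | hd0
      · simp
      · rw [Polynomial.coeff_sub, Polynomial.coeff_C, if_neg hd0.ne', sub_zero]
        have h5 : (Polynomial.derivative w).coeff (d - 1) = 0 := by rw [hw']; simp
        rw [Polynomial.coeff_derivative] at h5
        have hd1 : d - 1 + 1 = d := by omega
        rcases mul_eq_zero.mp h5 with h6 | h6
        · rwa [hd1] at h6
        · exfalso
          have hcast : ((d : ℕ) : F) = 0 := by
            rw [← hd1, Nat.cast_add, Nat.cast_one]; exact h6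
          rw [CharP.cast_eq_zero_iff F p d] at hcast
          exact Nat.not_dvd_of_pos_of_lt hd0 hd hcast
    rw [hmain h, hg, Ideal.mem_span_singleton]
    have heq : f * w * Polynomial.derivative h
          - Polynomial.C (w.coeff 0) * (f * Polynomial.derivative h)
        = (w - Polynomial.C (w.coeff 0)) * (f * Polynomial.derivative h) := by ring
    rw [heq]
    exact hdvd.mul_right _
end

section
/- Let p be a prime, F a field of characteristic p, and f ∈ F[X]. Let S_f : F[X] → F[X] be the map u ↦ ∂(f·u), and set g := (S_f)^{p−1}(1), so that g is the differential expression ∂(f∂(…(f∂f)…)) with p−1 occurrences of ∂ and p−1 occurrences of f. Then: (i) g is congruent modulo the ideal (X^p) to the constant polynomial g(0) (its coefficient of X^0), i.e. g − g(0) ∈ (X^p); and (ii) for every h ∈ F[X], (T_f)^p(h) − g(0)·(f·∂h) ∈ (X^p), where T_f(h) = f·∂h. In other words, the constant C(f) with (f∂)^[p] = C(f)·f∂ in Der(F[X]/(X^p)) is equal to ∂(f∂(…(f∂f)…)). -/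
/-!
`D = f∂` is a derivation of `F[X]`, and in characteristic `p` the Leibniz expansion of `D^p (ab)`
loses all middle binomial terms, so `D^p` is again a derivation. A derivation of `F[X]` is
determined by its value at `X`, and `D^p X = D^(p-1) f = f g`, whence `D^p = f g ∂`.
Since `D^p` commutes with `D`, comparing `D^(p+1) X` computed both ways gives `f² ∂g = 0`,
so `∂g = 0`: every monomial of `g` has exponent divisible by `p`, i.e. `g ≡ g(0) mod X^p`.
-/

open Polynomial Finset

namespace Derivation

section CommSemiring

variable {R A : Type*} [CommSemiring R] [CommSemiring A] [Algebra R A] (D : Derivation R A A)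

theorem iterate_apply_mul (n : ℕ) (a b : A) :
    D^[n] (a * b) = ∑ ij ∈ antidiagonal n, n.choose ij.1 • (D^[ij.1] a * D^[ij.2] b) := by
  induction n with
  | zero => simp
  | succ n ih =>
    rw [sum_antidiagonal_choose_succ_nsmul (M := A) (fun i j ↦ D^[i] a * D^[j] b) n]
    simp only [Function.iterate_succ_apply', ih, map_sum, map_nsmul, leibniz, smul_eq_mul,
      smul_add, sum_add_distrib]
    congr 1
    refine sum_congr rfl fun ⟨i, j⟩ hij ↦ ?_
    rw [mul_comm, n.choose_symm_of_eq_add (mem_antidiagonal.1 hij).symm]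

theorem iterate_prime_apply_mul {p : ℕ} [CharP A p] (hp : p.Prime) (a b : A) :
    D^[p] (a * b) = a * D^[p] b + b * D^[p] a := by
  rw [iterate_apply_mul, sum_eq_add_of_mem (0, p) (p, 0) (by simp) (by simp)
    (by simp [hp.ne_zero.symm])]
  · simp only [Nat.choose_zero_right, Nat.choose_self, Function.iterate_zero_apply, one_smul]
    ring
  · rintro ⟨i, j⟩ hij hne
    rw [HasAntidiagonal.mem_antidiagonal] at hij
    simp only [ne_eq, Prod.mk.injEq] at hne
    have hchoose : (p.choose i : A) = 0 :=
      (CharP.cast_eq_zero_iff A p _).2 (hp.dvd_choose_self (by omega) (by omega))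
    rw [nsmul_eq_mul, hchoose, zero_mul]

end CommSemiring

variable {R A : Type*} [CommSemiring R] [CommRing A] [Algebra R A] (D : Derivation R A A)
  {p : ℕ} [CharP A p]

noncomputable def iterateChar (hp : p.Prime) : Derivation R A A :=
  mk' (D.toLinearMap ^ p) fun a b ↦ by
    simpa only [Module.End.pow_apply, coeFn_coe, smul_eq_mul] using D.iterate_prime_apply_mul hp a b

@[simp]
theorem coe_iterateChar (hp : p.Prime) : ⇑(D.iterateChar hp) = (⇑D)^[p] := by
  ext a
  simp [iterateChar, Module.End.pow_apply]

end Derivation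

namespace Polynomial

section CommSemiring

variable {R : Type*} [CommSemiring R]

theorem derivation_apply {A : Type*} [AddCommMonoid A] [Module R A] [Module R[X] A]
    [IsScalarTower R R[X] A] (D : Derivation R R[X] A) (f : R[X]) :
    D f = derivative f • D X := by
  rw [← mkDerivation_apply, derivation_ext (mkDerivation_X R (D X))]

theorem iterate_mul_derivative_mul_left (f : R[X]) (k : ℕ) (u : R[X]) :
    (fun h ↦ f * derivative h)^[k] (f * u) = f * (fun u ↦ derivative (f * u))^[k] u :=
  (Function.Semiconj.iterate_right (f := (f * ·)) (ga := fun u ↦ derivative (f * u))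
    (gb := fun h ↦ f * derivative h) (fun _ ↦ rfl) k u).symm

end CommSemiring

variable {R : Type*} [CommRing R] {p : ℕ} [CharP R p]

theorem X_pow_dvd_sub_C_coeff_zero_of_derivative_eq_zero [NoZeroDivisors R] (hp : p ≠ 0)
    {g : R[X]} (hg : derivative g = 0) : X ^ p ∣ g - C (g.coeff 0) := by
  rw [← expand_contract p hg hp]
  set q := contract p g
  have hq : X ∣ q - C (q.coeff 0) := X_dvd_iff.2 (by simp)
  simpa [coeff_expand hp.bot_lt] using _root_.map_dvd (expand R p) hq

variable (f : R[X])

theorem iterate_prime_mul_derivative (hp : p.Prime) (h : R[X]) :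
    (fun h ↦ f * derivative h)^[p] h
      = f * (fun u ↦ derivative (f * u))^[p - 1] 1 * derivative h := by
  let D : Derivation R R[X] R[X] := f • derivative'
  have hD : ⇑D = fun h ↦ f * derivative h := rfl
  have hDX : D^[p] X = f * (fun u ↦ derivative (f * u))^[p - 1] 1 := by
    rw [← Nat.sub_one_add_one hp.ne_zero, Function.iterate_succ_apply, Nat.add_sub_cancel, hD]
    simpa only [derivative_X, mul_one] using iterate_mul_derivative_mul_left f (p - 1) 1
  rw [← hD, ← D.coe_iterateChar hp, derivation_apply, D.coe_iterateChar, hDX, smul_eq_mul,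
    mul_comm]

theorem derivative_iterate_derivative_mul_eq_zero [NoZeroDivisors R] (hp : p.Prime) :
    derivative ((fun u ↦ derivative (f * u))^[p - 1] 1) = 0 := by
  rcases eq_or_ne f 0 with rfl | hf
  · rw [← Nat.sub_one_add_one (Nat.sub_ne_zero_of_lt hp.one_lt), Function.iterate_succ_apply']
    simp
  have hcomm := Function.iterate_succ_apply' (fun h ↦ f * derivative h) p X
  rw [Function.iterate_succ_apply, iterate_prime_mul_derivative f hp,
    iterate_prime_mul_derivative f hp] at hcomm
  generalize (fun u ↦ derivative (f * u))^[p - 1] 1 = g at hcomm ⊢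
  simp only [derivative_X, mul_one, derivative_mul] at hcomm
  have hfg : f * f * derivative g = 0 := by linear_combination -hcomm
  simpa [hf] using hfg

end Polynomial

theorem witt_pth_power_constant_eq_word (p : ℕ) (hp : p.Prime) (F : Type*) [Field F] [CharP F p]
    (f : Polynomial F)
    (g : Polynomial F)
    (hg : g = (fun u : Polynomial F => Polynomial.derivative (f * u))^[p - 1] 1) :
    (g - Polynomial.C (g.coeff 0) ∈ Ideal.span {(Polynomial.X : Polynomial F) ^ p}) ∧
    (∀ h : Polynomial F,
      (fun h : Polynomial F => f * Polynomial.derivative h)^[p] h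
          - Polynomial.C (g.coeff 0) * (f * Polynomial.derivative h)
        ∈ Ideal.span {(Polynomial.X : Polynomial F) ^ p}) := by
  have hg' : derivative g = 0 := hg ▸ derivative_iterate_derivative_mul_eq_zero f hp
  have hmem : g - C (g.coeff 0) ∈ Ideal.span {X ^ p} :=
    Ideal.mem_span_singleton.2 (X_pow_dvd_sub_C_coeff_zero_of_derivative_eq_zero hp.ne_zero hg')
  refine ⟨hmem, fun h ↦ ?_⟩
  rw [iterate_prime_mul_derivative f hp, ← hg]
  convert Ideal.mul_mem_right (f * derivative h) _ hmem using 1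
  ring
end

section
/- Let p be a prime, F a field of characteristic p, and f ∈ F[X]. Let S_f : F[X] → F[X] be the map u ↦ ∂(f·u) and set g := (S_f)^{p−1}(1) (the word ∂f∂f…∂f with p−1 letters ∂ and p−1 letters f). Then ∂g = 0, i.e. the formal derivative of g vanishes identically. -/
open Polynomial Finset Function

theorem deriv_word_eq_zero (p : ℕ) (hp : p.Prime) (F : Type*) [Field F] [CharP F p]
    (f : Polynomial F) :
    Polynomial.derivative
        ((fun u : Polynomial F => Polynomial.derivative (f * u))^[p - 1] 1) = 0 := by
  have hp2 := hp.two_le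
  rcases eq_or_ne f 0 with rfl | hf
  · obtain ⟨m, hm⟩ : ∃ m, p - 1 = m + 1 := ⟨p - 2, by omega⟩
    rw [hm, Function.iterate_succ_apply]
    simp only [zero_mul, map_zero]
    rw [Function.iterate_fixed (by simp)]
    simp
  obtain ⟨m, hm⟩ : ∃ m, p = m + 1 := ⟨p - 1, by omega⟩
  set dL : Polynomial F →ₗ[F] Polynomial F := f • Polynomial.derivative with hdL
  set d : Polynomial F → Polynomial F := ⇑dL with hd
  have hdapp : ∀ q : Polynomial F, d q = f * derivative q := by
    intro q; simp [hd, hdL, smul_eq_mul]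
  have dmul : ∀ a b : Polynomial F, d (a * b) = a * d b + d a * b := by
    intro a b; simp only [hdapp, derivative_mul]; ring
  -- binomial Leibniz for iterates of d
  have hbin : ∀ (n : ℕ) (a b : Polynomial F), d^[n] (a * b) =
      ∑ k ∈ range (n + 1), n.choose k • (d^[n - k] a * d^[k] b) := by
    intro n
    induction n with
    | zero => intro a b; simp [Finset.range]
    | succ n IH =>
      intro a b
      calc
        d^[n + 1] (a * b) =
            d (∑ k ∈ range n.succ, n.choose k • (d^[n - k] a * d^[k] b)) := by
          rw [Function.iterate_succ_apply', IH]
        _ = (∑ k ∈ range n.succ, n.choose k • (d^[n - k + 1] a * d^[k] b)) +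
            ∑ k ∈ range n.succ, n.choose k • (d^[n - k] a * d^[k + 1] b) := by
          have hdsum : ∀ (s : Finset ℕ) (G : ℕ → Polynomial F),
              d (∑ i ∈ s, G i) = ∑ i ∈ s, d (G i) := fun s G => map_sum dL G s
          have hdnsmul : ∀ (c : ℕ) (x : Polynomial F), d (c • x) = c • d x :=
            fun c x => map_nsmul dL c x
          rw [hdsum]
          simp_rw [hdnsmul, dmul, Function.iterate_succ_apply', smul_add, sum_add_distrib]
          exact add_comm _ _
        _ = (∑ k ∈ range n.succ, n.choose k.succ • (d^[n - k] a * d^[k + 1] b)) +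
              1 • (d^[n + 1] a * d^[0] b) +
            ∑ k ∈ range n.succ, n.choose k • (d^[n - k] a * d^[k + 1] b) := ?_
        _ = ((∑ k ∈ range n.succ, n.choose k • (d^[n - k] a * d^[k + 1] b)) +
              ∑ k ∈ range n.succ, n.choose k.succ • (d^[n - k] a * d^[k + 1] b)) +
            1 • (d^[n + 1] a * d^[0] b) := by rw [add_comm, add_assoc]
        _ = (∑ i ∈ range n.succ,
              (n + 1).choose (i + 1) • (d^[n + 1 - (i + 1)] a * d^[i + 1] b)) +
            1 • (d^[n + 1] a * d^[0] b) := by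
          simp_rw [Nat.choose_succ_succ, Nat.succ_sub_succ, add_smul, sum_add_distrib]
        _ = ∑ k ∈ range n.succ.succ, n.succ.choose k • (d^[n.succ - k] a * d^[k] b) := by
          rw [sum_range_succ' _ n.succ, Nat.choose_zero_right, tsub_zero]
      congr
      refine (sum_range_succ' _ _).trans (congr_arg₂ (· + ·) ?_ ?_)
      · rw [sum_range_succ, Nat.choose_succ_self, zero_smul, add_zero]
        refine sum_congr rfl fun k hk => ?_
        rw [mem_range] at hk
        congr
        omega
      · rw [Nat.choose_zero_right, tsub_zero]
  -- char p: iterating p times is multiplicative-Leibniz with vanishing middle terms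
  have hleib : ∀ a b : Polynomial F, d^[p] (a * b) = a * d^[p] b + d^[p] a * b := by
    intro a b
    rw [hbin p a b]
    have h0 : (0 : ℕ) ∈ range (p + 1) := by simp [hp.pos]
    have hpmem : p ∈ range (p + 1) := by simp
    rw [Finset.sum_eq_add_of_mem 0 p h0 hpmem (by omega) ?_]
    · simp [Nat.choose_self]
      ring
    · intro k hk hk'
      rw [mem_range] at hk
      have h1 : 0 < k := by omega
      have h2 : k < p := by omega
      have hdvd : p ∣ p.choose k := hp.dvd_choose_self (by omega) h2
      obtain ⟨c, hc⟩ := hdvd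
      rw [hc]
      have : ((p * c : ℕ) : Polynomial F) = 0 := by
        push_cast
        rw [CharP.cast_eq_zero]
        ring
      rw [nsmul_eq_mul, this, zero_mul]
  -- d^[p] kills constants
  have hC : ∀ c : F, d^[p] (C c) = 0 := by
    intro c
    rw [hm, Function.iterate_succ_apply]
    have : d (C c) = 0 := by simp [hdapp]
    rw [this, Function.iterate_fixed (by simp [hdapp])]
  -- d^[p] is additive
  have hadd : ∀ a b : Polynomial F, d^[p] (a + b) = d^[p] a + d^[p] b := by
    intro a b
    have : d^[p] = ⇑(dL ^ p) := by
      funext x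
      rw [Module.End.pow_apply]
    rw [this]
    exact map_add _ a b
  -- a derivation on F[X] is determined by its value at X
  have hdet : ∀ q : Polynomial F, d^[p] q = derivative q * d^[p] X := by
    intro q
    induction q using Polynomial.induction_on with
    | C a => rw [hC]; simp
    | add q r hq hr => rw [hadd, hq, hr, derivative_add]; ring
    | monomial n a hq =>
      have : (C a : Polynomial F) * X ^ (n + 1) = (C a * X ^ n) * X := by ring
      rw [this, hleib, hq]
      simp only [derivative_mul, derivative_X, mul_one]
      ring
  -- the key recursion: f * S^[k] 1 = d^[k] f
  set S : Polynomial F → Polynomial F := fun u => Polynomial.derivative (f * u) with hS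
  have hA : ∀ k, f * S^[k] 1 = d^[k] f := by
    intro k
    induction k with
    | zero => simp
    | succ k ih =>
      rw [Function.iterate_succ_apply', Function.iterate_succ_apply', ← ih, hdapp, hS]
  set g : Polynomial F := S^[p - 1] 1 with hg
  have hfg : f * g = d^[p - 1] f := hA (p - 1)
  have hdX : d X = f := by simp [hdapp]
  have hXp : d^[p] X = d^[p - 1] f := by
    conv_lhs => rw [hm]
    rw [Function.iterate_succ_apply, hdX, hm]
    simp
  have key1 : d^[p] f = derivative f * (f * g) := by
    rw [hdet f, hXp, hfg]
  have key2 : d^[p] f = f * (derivative f * g + f * derivative g) := by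
    conv_lhs => rw [hm]
    rw [Function.iterate_succ_apply']
    have : d^[m] f = f * g := by rw [hfg, hm]; simp
    rw [this, hdapp, derivative_mul]
  have hzero : f * f * derivative g = 0 := by
    have := key1.symm.trans key2
    linear_combination -this
  show derivative g = 0
  exact (mul_eq_zero.mp hzero).resolve_left (mul_ne_zero hf hf)
end

section
/- Let p be a prime, F a field of characteristic p, and f ∈ F[X]. Let T_f : F[X] → F[X] be the map h ↦ f·∂h, let S_f : F[X] → F[X] be the map u ↦ ∂(f·u), and set g := (S_f)^{p−1}(1). Then for every h ∈ F[X], one has the exact identity (T_f)^p(h) = f·g·∂h. -/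
open Polynomial Finset

private lemma iterD_leibniz {F : Type*} [CommRing F] (f : Polynomial F) (n : ℕ)
    (a b : Polynomial F) :
    (fun h : Polynomial F => f * derivative h)^[n] (a * b) =
      ∑ k ∈ range n.succ,
        n.choose k • ((fun h : Polynomial F => f * derivative h)^[n - k] a *
          (fun h : Polynomial F => f * derivative h)^[k] b) := by
  set D := fun h : Polynomial F => f * derivative h with hDdef
  have hDsum : ∀ (s : Finset ℕ) (g : ℕ → Polynomial F),
      D (∑ k ∈ s, g k) = ∑ k ∈ s, D (g k) := by
    intro s g; simp [hDdef, derivative_sum, mul_sum]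
  have hDsmul : ∀ (m : ℕ) (x : Polynomial F), D (m • x) = m • D x := by
    intro m x
    simp only [hDdef]
    rw [map_nsmul derivative m x, mul_smul_comm]
  have hDmul : ∀ a b : Polynomial F, D (a * b) = D a * b + a * D b := by
    intro a b
    simp only [hDdef, derivative_mul]
    ring
  induction n with
  | zero =>
    simp [Finset.range]
  | succ n IH =>
    calc
      D^[n + 1] (a * b) =
          D (∑ k ∈ range n.succ,
              n.choose k • (D^[n - k] a * D^[k] b)) := by
        rw [Function.iterate_succ_apply', IH]
      _ = (∑ k ∈ range n.succ,
            n.choose k • (D^[n - k + 1] a * D^[k] b)) +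
          ∑ k ∈ range n.succ,
            n.choose k • (D^[n - k] a * D^[k + 1] b) := by
        rw [hDsum]
        simp_rw [hDsmul, hDmul, Function.iterate_succ_apply',
          smul_add, sum_add_distrib]
      _ = (∑ k ∈ range n.succ,
                n.choose k.succ • (D^[n - k] a * D^[k + 1] b)) +
              1 • (D^[n + 1] a * D^[0] b) +
            ∑ k ∈ range n.succ, n.choose k • (D^[n - k] a * D^[k + 1] b) :=
        ?_
      _ = ((∑ k ∈ range n.succ, n.choose k • (D^[n - k] a * D^[k + 1] b)) +
              ∑ k ∈ range n.succ,
                n.choose k.succ • (D^[n - k] a * D^[k + 1] b)) +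
            1 • (D^[n + 1] a * D^[0] b) := by
        rw [add_comm, add_assoc]
      _ = (∑ i ∈ range n.succ,
              (n + 1).choose (i + 1) • (D^[n + 1 - (i + 1)] a * D^[i + 1] b)) +
            1 • (D^[n + 1] a * D^[0] b) := by
        simp_rw [Nat.choose_succ_succ, Nat.succ_sub_succ, add_smul, sum_add_distrib]
      _ = ∑ k ∈ range n.succ.succ,
            n.succ.choose k • (D^[n.succ - k] a * D^[k] b) := by
        rw [sum_range_succ' _ n.succ, Nat.choose_zero_right, tsub_zero]
    congr
    refine (sum_range_succ' _ _).trans (congr_arg₂ (· + ·) ?_ ?_)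
    · rw [sum_range_succ, Nat.choose_succ_self, zero_smul, add_zero]
      refine sum_congr rfl fun k hk => ?_
      rw [mem_range] at hk
      congr
      omega
    · rw [Nat.choose_zero_right, tsub_zero]

theorem pth_iterate_eq_word_mul_deriv (p : ℕ) (hp : p.Prime) (F : Type*) [Field F] [CharP F p]
    (f : Polynomial F)
    (g : Polynomial F)
    (hg : g = (fun u : Polynomial F => Polynomial.derivative (f * u))^[p - 1] 1) :
    ∀ h : Polynomial F,
      (fun h : Polynomial F => f * Polynomial.derivative h)^[p] h
        = f * g * Polynomial.derivative h := by
  set D := fun h : Polynomial F => f * derivative h with hDdef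
  have hp0 : 0 < p := hp.pos
  -- p-th iterate satisfies the plain Leibniz rule in characteristic p
  have key : ∀ a b : Polynomial F, D^[p] (a * b) = D^[p] a * b + a * D^[p] b := by
    intro a b
    rw [hDdef, iterD_leibniz f p a b]
    rw [sum_range_succ]
    have hmid : ∑ k ∈ range p,
        p.choose k • ((fun h : Polynomial F => f * derivative h)^[p - k] a *
          (fun h : Polynomial F => f * derivative h)^[k] b)
        = (fun h : Polynomial F => f * derivative h)^[p] a * b := by
      have hsingle := Finset.sum_eq_single_of_mem (s := range p)
        (f := fun k => p.choose k • ((fun h : Polynomial F => f * derivative h)^[p - k] a *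
          (fun h : Polynomial F => f * derivative h)^[k] b))
        0 (mem_range.2 hp0) ?_
      · rw [hsingle]; simp
      · intro k hk hk0
        have hkp : k < p := mem_range.1 hk
        have hdvd : p ∣ p.choose k := Nat.Prime.dvd_choose_self hp hk0 hkp
        have hcast : ((p.choose k : ℕ) : Polynomial F) = 0 := by
          rw [← Polynomial.C_eq_natCast, show ((p.choose k : ℕ) : F) = 0 from
            (CharP.cast_eq_zero_iff F p _).2 hdvd, map_zero]
        rw [nsmul_eq_mul, hcast, zero_mul]
    rw [hmid]
    simp
  -- additivity and zero for iterates
  have hzero : ∀ n : ℕ, D^[n] 0 = 0 := by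
    intro n
    induction n with
    | zero => simp
    | succ n IH => rw [Function.iterate_succ_apply', IH]; simp [hDdef]
  have hadd : ∀ (n : ℕ) (a b : Polynomial F), D^[n] (a + b) = D^[n] a + D^[n] b := by
    intro n
    induction n with
    | zero => simp
    | succ n IH =>
      intro a b
      rw [Function.iterate_succ_apply', Function.iterate_succ_apply',
        Function.iterate_succ_apply', IH]
      simp [hDdef, mul_add]
  -- key value : D^[p] X = f * g
  have hX : D^[p] Polynomial.X = f * g := by
    have hstep : ∀ k : ℕ, D^[k + 1] Polynomial.X
        = f * (fun u : Polynomial F => derivative (f * u))^[k] 1 := by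
      intro k
      induction k with
      | zero => simp [hDdef]
      | succ k IH =>
        rw [Function.iterate_succ_apply', IH, Function.iterate_succ_apply']
    have h1 := hstep (p - 1)
    rwa [Nat.sub_add_cancel hp0, ← hg] at h1
  intro h
  induction h using Polynomial.induction_on with
  | C a =>
    obtain ⟨q, hq⟩ : ∃ q, p = q + 1 := ⟨p - 1, (Nat.sub_add_cancel hp0).symm⟩
    rw [hq, Function.iterate_succ_apply]
    have : D (C a) = 0 := by simp [hDdef]
    rw [this, hzero]
    simp
  | add u v hu hv =>
    rw [hadd, hu, hv, derivative_add, mul_add]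
  | monomial n a ih =>
    have hrw : (C a) * Polynomial.X ^ (n + 1) = ((C a) * Polynomial.X ^ n) * Polynomial.X := by
      ring
    rw [hrw, key, ih, hX]
    simp only [derivative_mul, derivative_X, derivative_C]
    ring
end

section
/- Let p be a prime, F a field of characteristic p, and let k be an integer with 2 ≤ k ≤ p − 1. Let T_k : F[X] → F[X] be the map h ↦ X^k·∂h (the derivation x^k∂). Then T_k^p = 0, i.e. for every h ∈ F[X], the p-fold iterate satisfies T_k^p(h) = 0. (Hence (x^k∂)^[p] = 0 in the Witt algebra W = Der(F[X]/(X^p)) for k = 2, 3, …, p−1.) -/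
open Polynomial Finset

private lemma Tstep (F : Type*) [Field F] (k : ℕ) (hk : 1 ≤ k) (m : ℕ) :
    (X ^ k : F[X]) * derivative (X ^ m) = (m : F) • X ^ (m + (k - 1)) := by
  rcases m with _ | m'
  · simp
  · rw [derivative_X_pow, Polynomial.smul_eq_C_mul]
    have h1 : m' + 1 + (k - 1) = k + m' := by omega
    have h2 : m' + 1 - 1 = m' := rfl
    rw [h1, h2, pow_add]
    push_cast
    ring

private lemma Titer_add (F : Type*) [Field F] (k j : ℕ) (f g : F[X]) :
    (fun h : F[X] => X ^ k * derivative h)^[j] (f + g)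
      = (fun h : F[X] => X ^ k * derivative h)^[j] f
        + (fun h : F[X] => X ^ k * derivative h)^[j] g := by
  induction j generalizing f g with
  | zero => simp
  | succ j ih => simp [Function.iterate_succ_apply, derivative_add, mul_add, ih]

private lemma Titer_smul (F : Type*) [Field F] (k j : ℕ) (a : F) (f : F[X]) :
    (fun h : F[X] => X ^ k * derivative h)^[j] (a • f)
      = a • (fun h : F[X] => X ^ k * derivative h)^[j] f := by
  induction j generalizing f with
  | zero => simp
  | succ j ih => simp [Function.iterate_succ_apply, derivative_smul, mul_smul_comm, ih]

private lemma Titer_X_pow (F : Type*) [Field F] (k : ℕ) (hk : 1 ≤ k) (j n : ℕ) :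
    (fun h : F[X] => X ^ k * derivative h)^[j] (X ^ n)
      = (∏ i ∈ Finset.range j, ((n + i * (k - 1) : ℕ) : F)) • X ^ (n + j * (k - 1)) := by
  induction j with
  | zero => simp
  | succ j ih =>
    rw [Function.iterate_succ_apply', ih]
    rw [derivative_smul, mul_smul_comm, Tstep F k hk]
    rw [smul_smul, Finset.prod_range_succ]
    congr 1
    ring_nf

theorem monomial_field_pth_power_eq_zero (p : ℕ) (hp : p.Prime) (F : Type*) [Field F] [CharP F p]
    (k : ℕ) (hk2 : 2 ≤ k) (hkp : k ≤ p - 1) :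
    ∀ h : Polynomial F,
      (fun h : Polynomial F => Polynomial.X ^ k * Polynomial.derivative h)^[p] h = 0 := by
  haveI : Fact p.Prime := ⟨hp⟩
  have hk1 : 1 ≤ k := by omega
  have hp2 : 2 ≤ p := hp.two_le
  have hk1p : 1 ≤ k - 1 ∧ k - 1 < p := ⟨by omega, by omega⟩
  -- key: for every n, the product vanishes
  have key : ∀ n : ℕ, (∏ i ∈ Finset.range p, ((n + i * (k - 1) : ℕ) : F)) = 0 := by
    intro n
    have hu : ((k - 1 : ℕ) : ZMod p) ≠ 0 := by
      rw [Ne, ZMod.natCast_eq_zero_iff]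
      intro hdvd
      have := Nat.le_of_dvd (by omega) hdvd
      omega
    set i0 : ZMod p := (-(n : ZMod p)) * ((k - 1 : ℕ) : ZMod p)⁻¹ with hi0
    refine Finset.prod_eq_zero (Finset.mem_range.mpr (ZMod.val_lt i0)) ?_
    rw [CharP.cast_eq_zero_iff F p]
    rw [← ZMod.natCast_eq_zero_iff]
    rw [Nat.cast_add, Nat.cast_mul, ZMod.natCast_val, ZMod.cast_id, hi0, mul_assoc,
      inv_mul_cancel₀ hu, mul_one, add_neg_cancel]
  intro h
  induction h using Polynomial.induction_on' with
  | add f g hf hg => rw [Titer_add, hf, hg, add_zero]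
  | monomial n a =>
    rw [← Polynomial.smul_X_eq_monomial, Titer_smul, Titer_X_pow F k hk1 p n, key, zero_smul,
      smul_zero]
end

section
/- Let p be a prime and n an integer with 1 ≤ n ≤ p − 1. Work in the multivariate polynomial ring ℤ[u_1, …, u_{p−1}] and let D be the unique ℤ-derivation of this ring with D(u_i) = 1 for every i. Set f := u_1·u_2·…·u_{p−1} and let S be the map g ↦ D(f·g), so that S^n(1) is the word (∂f)^n = ∂f∂f…∂f with n letters ∂ and n letters f. Let J = (j_1, …, j_m) be a Young diagram with N(J) = n and m ≤ p − 1. Then the coefficient of the monomial u_1^{n−j_1}·u_2^{n−j_2}·…·u_m^{n−j_m}·u_{m+1}^n·…·u_{p−1}^n in S^n(1) equals d(J). -/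
/-- Decrement the `s`-th entry of `J` by one, deleting it if it becomes zero
(entries of a Young diagram are positive, so only the modified entry can vanish). -/
def YoungStep (J : List ℕ) (s : ℕ) : List ℕ :=
  (J.set s (J.getD s 0 - 1)).filter (· != 0)

/-- `dAux n J` computes the function `d` on Young diagrams, using the fuel `n`
(which is taken to be `N(J) = j_1 + ⋯ + j_m`, the amount by which the recursion
descends; `d(∅) = 1`). -/
def dAux : ℕ → List ℕ → ℤ
  | 0, _ => 1
  | n + 1, J =>
    ∑ s ∈ (Finset.range J.length).filter (fun s => J.getD (s + 1) 0 < J.getD s 0),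
      ((J.sum : ℤ) - (J.getD s 0 : ℤ) + 1) * (J.count (J.getD s 0) : ℤ) * dAux n (YoungStep J s)

/-- The function `d` on Young diagrams: `d(∅) = 1` and
`d(J) = ∑_{s : j_s > j_{s+1}} (N(J) − j_s + 1) · n_{j_s}(J) · d(j_1,…,j_s − 1,…,j_m)`. -/
def youngD (J : List ℕ) : ℤ := dAux J.sum J

/-!
Write `D = ∑ ∂/∂uᵢ` and `f = u₁ ⋯ u_{p-1}`. The coefficient of `u^m` in `D(f g)` is
`∑ᵢ (mᵢ + 1) · [u^(m + eᵢ - 𝟙)] g`, so the coefficient of `u^(n+1-J)` in `S^(n+1)(1)` is a sum over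
the rows `i` of `J` of `(n + 2 - jᵢ)` times the coefficient of `u^(n - (J - eᵢ))` in `Sⁿ(1)`; rows
beyond `J` contribute nothing because no variable occurs in `Sⁿ(1)` to a power above `n`. As `Sⁿ(1)`
is symmetric in the variables, `J - eᵢ` may be re-sorted, which shortens the last row of length
`jᵢ` instead; the `n_{jᵢ}(J)` rows of that length thus contribute equally, and the result is the
recursion defining `d`.
-/

open Finset MvPolynomial

section YoungDiagram

variable {J : List ℕ} {s : ℕ}

lemma getD_le_sum (J : List ℕ) (i : ℕ) : J.getD i 0 ≤ J.sum := by
  induction J generalizing i with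
  | nil => simp
  | cons a t ih =>
    cases i
    · exact Nat.le_add_right _ _
    · exact (ih _).trans (Nat.le_add_left _ _)

lemma getD_add_getD_le_sum {i k : ℕ} (hik : i ≠ k) : J.getD i 0 + J.getD k 0 ≤ J.sum := by
  induction J generalizing i k with
  | nil => simp
  | cons a t ih =>
    rcases i with _ | i <;> rcases k with _ | k
    · exact absurd rfl hik
    · simpa using getD_le_sum t k
    · simpa [add_comm a] using getD_le_sum t i
    · simpa using (ih (by omega)).trans (Nat.le_add_left _ a)

lemma getD_pos (hpos : ∀ x ∈ J, 0 < x) {i : ℕ} (hi : i < J.length) : 0 < J.getD i 0 := by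
  rw [List.getD_eq_getElem _ _ hi]
  exact hpos _ (J.getElem_mem hi)

lemma getD_le_getD_of_le (hmono : J.Pairwise (· ≥ ·)) {a b : ℕ} (hab : a ≤ b) :
    J.getD b 0 ≤ J.getD a 0 := by
  rcases lt_or_ge b J.length with hb | hb
  · rw [List.getD_eq_getElem _ _ hb, List.getD_eq_getElem _ _ (hab.trans_lt hb)]
    rcases hab.eq_or_lt with rfl | hlt
    · rfl
    · exact List.pairwise_iff_getElem.1 hmono a b _ hb hlt
  · rw [List.getD_eq_default _ _ hb]
    exact Nat.zero_le _

lemma getD_set_of_lt (hs : s < J.length) (x k : ℕ) :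
    (J.set s x).getD k 0 = if k = s then x else J.getD k 0 := by
  rcases lt_or_ge k J.length with hk | hk
  · rw [List.getD_eq_getElem _ _ (by simpa using hk), List.getElem_set,
      List.getD_eq_getElem _ _ hk]
    rcases eq_or_ne k s with rfl | h
    · simp
    · simp [h, Ne.symm h]
  · rw [List.getD_eq_default _ _ (by simpa using hk), List.getD_eq_default _ _ hk, if_neg (by omega)]

lemma getD_filter_ne_zero (hmono : J.Pairwise (· ≥ ·)) (k : ℕ) :
    (J.filter (· != 0)).getD k 0 = J.getD k 0 := by
  induction J generalizing k with
  | nil => rfl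
  | cons a t ih =>
    rcases Nat.eq_zero_or_pos a with rfl | ha
    · have hzero : ∀ x ∈ 0 :: t, x = 0 := by simpa using List.pairwise_cons.1 hmono |>.1
      rw [List.filter_eq_nil_iff.2 fun x hx => by simp [hzero x hx]]
      exact (Nat.le_zero.1 (getD_le_getD_of_le hmono (Nat.zero_le k))).symm
    · rw [List.filter_cons_of_pos (by simpa using ha.ne')]
      cases k
      · rfl
      · exact ih (List.pairwise_cons.1 hmono).2 _

lemma sum_filter_ne_zero (J : List ℕ) : (J.filter (· != 0)).sum = J.sum := by
  induction J with
  | nil => rfl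
  | cons a t ih => by_cases ha : a = 0 <;> simp [ha, ih]

def corners (J : List ℕ) : Finset ℕ :=
  (range J.length).filter fun s => J.getD (s + 1) 0 < J.getD s 0

lemma mem_corners : s ∈ corners J ↔ s < J.length ∧ J.getD (s + 1) 0 < J.getD s 0 := by
  simp [corners]

lemma pairwise_set_of_mem_corners (hmono : J.Pairwise (· ≥ ·)) (hs : s ∈ corners J) :
    (J.set s (J.getD s 0 - 1)).Pairwise (· ≥ ·) := by
  obtain ⟨hs, hlt⟩ := mem_corners.1 hs
  rw [List.pairwise_iff_getElem]
  intro i j hi hj hij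
  simp only [List.length_set] at hi hj
  rw [← List.getD_eq_getElem _ 0, ← List.getD_eq_getElem _ 0, getD_set_of_lt hs,
    getD_set_of_lt hs]
  split_ifs with h1 h2 h2
  · omega
  · have := getD_le_getD_of_le hmono (show s + 1 ≤ j by omega); omega
  · have := getD_le_getD_of_le hmono (show i ≤ s by omega); omega
  · exact getD_le_getD_of_le hmono hij.le

lemma getD_youngStep (hmono : J.Pairwise (· ≥ ·)) (hs : s ∈ corners J) (k : ℕ) :
    (YoungStep J s).getD k 0 = J.getD k 0 - if k = s then 1 else 0 := by
  rw [YoungStep, getD_filter_ne_zero (pairwise_set_of_mem_corners hmono hs),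
    getD_set_of_lt (mem_corners.1 hs).1]
  split_ifs <;> simp_all

lemma youngStep_pairwise (hmono : J.Pairwise (· ≥ ·)) (hs : s ∈ corners J) :
    (YoungStep J s).Pairwise (· ≥ ·) :=
  (pairwise_set_of_mem_corners hmono hs).filter _

lemma youngStep_pos : ∀ x ∈ YoungStep J s, 0 < x := by
  intro x hx
  simpa [Nat.pos_iff_ne_zero] using List.of_mem_filter hx

lemma youngStep_length_le : (YoungStep J s).length ≤ J.length :=
  (List.length_filter_le _ _).trans (List.length_set ..).le

lemma youngStep_sum (hpos : ∀ x ∈ J, 0 < x) (hs : s < J.length) :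
    (YoungStep J s).sum + 1 = J.sum := by
  have hset := List.sum_set J s (J.getD s 0)
  rw [List.getD_eq_getElem _ _ hs, List.set_getElem_self] at hset
  rw [YoungStep, sum_filter_ne_zero, List.sum_set, hset, if_pos hs, if_pos hs,
    List.getD_eq_getElem _ _ hs]
  have := getD_pos hpos hs
  rw [List.getD_eq_getElem _ _ hs] at this
  omega

lemma youngD_eq_sum_corners (hpos : ∀ x ∈ J, 0 < x) (hJ : J ≠ []) :
    youngD J = ∑ s ∈ corners J,
      ((J.sum : ℤ) - J.getD s 0 + 1) * J.count (J.getD s 0) * youngD (YoungStep J s) := by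
  obtain ⟨n, hn⟩ : ∃ n, J.sum = n + 1 := Nat.exists_eq_add_one.2 <| by
    obtain ⟨a, t, rfl⟩ := List.exists_cons_of_ne_nil hJ
    simpa using Nat.lt_add_right _ (hpos a (by simp))
  unfold youngD
  rw [hn, dAux]
  refine sum_congr rfl fun s hs => ?_
  have := youngStep_sum hpos (mem_corners.1 hs).1
  rw [show (YoungStep J s).sum = n by omega, hn]

/-- Shortening row `i` of a Young diagram and re-sorting amounts to shortening this row. -/
def cornerRow (J : List ℕ) (i : ℕ) : ℕ :=
  Nat.findGreatest (fun k => J.getD k 0 = J.getD i 0) (J.length - 1)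

variable {i : ℕ}

lemma cornerRow_lt_length (hi : i < J.length) : cornerRow J i < J.length :=
  (Nat.findGreatest_le _).trans_lt (by omega)

lemma getD_cornerRow (hi : i < J.length) : J.getD (cornerRow J i) 0 = J.getD i 0 :=
  Nat.findGreatest_spec (P := fun k => J.getD k 0 = J.getD i 0) (m := i) (by omega) rfl

lemma cornerRow_mem_corners (hpos : ∀ x ∈ J, 0 < x) (hmono : J.Pairwise (· ≥ ·))
    (hi : i < J.length) : cornerRow J i ∈ corners J := by
  have hc := cornerRow_lt_length hi
  refine mem_corners.2 ⟨hc, (getD_le_getD_of_le hmono (Nat.le_succ _)).lt_of_ne ?_⟩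
  rcases lt_or_ge (cornerRow J i + 1) J.length with hlt | hge
  · rw [getD_cornerRow hi]
    exact Nat.findGreatest_is_greatest (P := fun k => J.getD k 0 = J.getD i 0)
      (Nat.lt_succ_self _) (by omega)
  · rw [List.getD_eq_default _ _ hge]
    exact (getD_pos hpos hc).ne

lemma cornerRow_eq_iff (hmono : J.Pairwise (· ≥ ·)) (hs : s ∈ corners J) (hi : i < J.length) :
    cornerRow J i = s ↔ J.getD i 0 = J.getD s 0 := by
  refine ⟨fun h => h ▸ (getD_cornerRow hi).symm, fun h => ?_⟩
  obtain ⟨hs, hlt⟩ := mem_corners.1 hs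
  have hcongr : cornerRow J i = cornerRow J s := by unfold cornerRow; rw [h]
  rw [hcongr]
  refine le_antisymm (not_lt.1 fun hgt => ?_)
    (Nat.le_findGreatest (P := fun k => J.getD k 0 = J.getD s 0) (by omega) rfl)
  have := getD_le_getD_of_le hmono (show s + 1 ≤ cornerRow J s from hgt)
  rw [getD_cornerRow hs] at this
  omega

lemma card_filter_getD_eq_count (J : List ℕ) (v : ℕ) :
    #{k ∈ range J.length | J.getD k 0 = v} = J.count v := by
  induction J with
  | nil => simp
  | cons a t ih =>
    rw [card_filter, List.length_cons, sum_range_succ', ← card_filter]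
    simp only [List.getD_cons_succ, List.getD_cons_zero, ih, List.count_cons, beq_iff_eq]

lemma sum_range_length_comp_cornerRow {M : Type*} [AddCommMonoid M] (hpos : ∀ x ∈ J, 0 < x)
    (hmono : J.Pairwise (· ≥ ·)) (F : ℕ → M) :
    ∑ i ∈ range J.length, F (cornerRow J i) = ∑ s ∈ corners J, J.count (J.getD s 0) • F s := by
  rw [← sum_fiberwise_of_maps_to (g := cornerRow J) (t := corners J)
    fun i hi => cornerRow_mem_corners hpos hmono (mem_range.1 hi)]
  refine sum_congr rfl fun s hs => ?_
  rw [sum_congr rfl fun i hi => by rw [(mem_filter.1 hi).2], sum_const,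
    filter_congr fun i hi => cornerRow_eq_iff hmono hs (mem_range.1 hi),
    card_filter_getD_eq_count]

end YoungDiagram

section DerivMulProdX

variable {σ R : Type*} [Fintype σ] [CommSemiring R]

lemma derivation_eq_sum_pderiv {D : Derivation R (MvPolynomial σ R) (MvPolynomial σ R)}
    (hD : ∀ i, D (X i) = 1) (g : MvPolynomial σ R) : D g = ∑ i, pderiv i g := by
  classical
  have hsum_apply (g : MvPolynomial σ R) :
      (∑ i, pderiv i : Derivation R (MvPolynomial σ R) (MvPolynomial σ R)) g =
        ∑ i, pderiv i g := by
    rw [← Derivation.coeFnAddMonoidHom_apply, map_sum, Finset.sum_apply]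
    rfl
  have hsum : D = ∑ i, pderiv i := derivation_ext fun j => by
    rw [hD, hsum_apply]
    simp [pderiv_X, Pi.single_apply]
  rw [hsum, hsum_apply]

/-- The map `S : g ↦ D(f g)`, written with `D = ∑ ∂/∂Xᵢ` (`derivation_eq_sum_pderiv`). -/
noncomputable def derivMulProdX (g : MvPolynomial σ R) : MvPolynomial σ R :=
  ∑ i, pderiv i ((∏ j : σ, X j) * g)

lemma coeff_prod_X_mul (m : σ →₀ ℕ) (g : MvPolynomial σ R) :
    coeff m ((∏ j : σ, X j) * g) =
      if ∀ j, 1 ≤ m j then coeff (m - Finsupp.equivFunOnFinite.symm 1) g else 0 := by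
  classical
  have hprod : (∏ j, X j : MvPolynomial σ R) = monomial (Finsupp.equivFunOnFinite.symm 1) 1 := by
    have := prod_X_pow (R := R) (1 : σ → ℕ) univ
    simp only [Pi.one_apply, pow_one] at this
    rw [this, show (Finsupp.indicator univ fun _ _ => (1 : ℕ)) = Finsupp.equivFunOnFinite.symm 1
      by ext; simp]
  simp only [hprod, coeff_monomial_mul', one_mul, Finsupp.le_def,
    Finsupp.equivFunOnFinite_symm_apply_apply, Pi.one_apply]

lemma coeff_derivMulProdX (m : σ →₀ ℕ) (g : MvPolynomial σ R) :
    coeff m (derivMulProdX g) =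
      ∑ i, coeff (m + Finsupp.single i 1) ((∏ j : σ, X j) * g) * ((m i : R) + 1) := by
  simp only [derivMulProdX, coeff_sum, coeff_pderiv]

lemma coeff_prod_X_mul_eq_zero {g : MvPolynomial σ R} {k : ℕ} {i : σ}
    (hg : ∀ m : σ →₀ ℕ, k < m i → coeff m g = 0) {m : σ →₀ ℕ} (hm : k + 1 < m i) :
    coeff m ((∏ j : σ, X j) * g) = 0 := by
  rw [coeff_prod_X_mul]
  split_ifs
  · exact hg _ (by simp; omega)
  · rfl

lemma coeff_derivMulProdX_iterate_eq_zero (k : ℕ) {m : σ →₀ ℕ} {i : σ} (h : k < m i) :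
    coeff m (derivMulProdX^[k] (1 : MvPolynomial σ R)) = 0 := by
  classical
  induction k generalizing m with
  | zero =>
    rw [Function.iterate_zero_apply, coeff_one, if_neg]
    rintro rfl
    simp at h
  | succ k ih =>
    rw [Function.iterate_succ_apply', coeff_derivMulProdX]
    refine sum_eq_zero fun j _ => ?_
    rw [coeff_prod_X_mul_eq_zero (fun _ => ih) (by simp [Finsupp.single_apply]; omega), zero_mul]

lemma commute_rename_derivMulProdX (e : σ ≃ σ) :
    Function.Commute (rename e : MvPolynomial σ R → MvPolynomial σ R) derivMulProdX := by
  intro g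
  have hprod : rename e (∏ j, (X j : MvPolynomial σ R)) = ∏ j, X j := by
    simpa only [map_prod, rename_X] using Fintype.prod_equiv e _ _ fun _ => rfl
  rw [derivMulProdX, derivMulProdX, map_sum,
    ← e.sum_comp fun i => pderiv i ((∏ j : σ, X j) * rename e g)]
  refine sum_congr rfl fun i _ => ?_
  rw [← pderiv_rename e.injective, map_mul, hprod]

lemma coeff_equivMapDomain_derivMulProdX_iterate (e : σ ≃ σ) (m : σ →₀ ℕ) (k : ℕ) :
    coeff (m.equivMapDomain e) (derivMulProdX^[k] (1 : MvPolynomial σ R)) =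
      coeff m (derivMulProdX^[k] 1) := by
  rw [Finsupp.equivMapDomain_eq_mapDomain, ← coeff_rename_mapDomain e e.injective _ m,
    (commute_rename_derivMulProdX e).iterate_right k 1, map_one]

end DerivMulProdX

section YoungExponent

variable {q n : ℕ} {J : List ℕ}

noncomputable def youngExponent (q n : ℕ) (J : List ℕ) : Fin q →₀ ℕ :=
  Finsupp.equivFunOnFinite.symm fun i => n - J.getD i 0

lemma youngExponent_apply (i : Fin q) : youngExponent q n J i = n - J.getD i 0 := rfl

lemma one_le_youngExponent_add_single (hpos : ∀ x ∈ J, 0 < x) (hJ : J.sum = n + 1)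
    {i : Fin q} (hi : (i : ℕ) < J.length) (k : Fin q) :
    1 ≤ (youngExponent q (n + 1) J + Finsupp.single i 1 : Fin q →₀ ℕ) k := by
  rw [Finsupp.add_apply, youngExponent_apply, Finsupp.single_apply]
  split_ifs with hik
  · omega
  · have := getD_add_getD_le_sum (J := J) (Fin.val_injective.ne hik)
    have := getD_pos hpos hi
    omega

/-- Raising the exponent of `Xᵢ` and dividing by `f` shortens row `i` of `J`; swapping rows `i`
and `c` re-sorts the result. -/
lemma youngExponent_add_single_sub (hpos : ∀ x ∈ J, 0 < x) (hmono : J.Pairwise (· ≥ ·))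
    (hJ : J.sum = n + 1) {i c : Fin q} (hi : (i : ℕ) < J.length) (hc : (c : ℕ) = cornerRow J i) :
    youngExponent q (n + 1) J + Finsupp.single i 1 - Finsupp.equivFunOnFinite.symm 1 =
      (youngExponent q n (YoungStep J c)).equivMapDomain (Equiv.swap i c) := by
  have hcorner := cornerRow_mem_corners hpos hmono hi
  have hval := getD_cornerRow hi
  have hle := getD_le_sum J i
  have hipos := getD_pos hpos hi
  rw [← hc] at hcorner hval
  ext k
  rw [Finsupp.equivMapDomain_apply, Equiv.symm_swap, Finsupp.tsub_apply, Finsupp.add_apply,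
    youngExponent_apply, youngExponent_apply, getD_youngStep hmono hcorner,
    Finsupp.equivFunOnFinite_symm_apply_apply, Pi.one_apply, Finsupp.single_apply]
  rcases eq_or_ne k i with rfl | hki
  · rw [Equiv.swap_apply_left, if_pos rfl, if_pos rfl]
    omega
  · have hk := getD_add_getD_le_sum (J := J) (Fin.val_injective.ne hki.symm)
    rcases eq_or_ne k c with rfl | hkc
    · rw [Equiv.swap_apply_right, if_neg hki.symm, if_neg (Fin.val_injective.ne hki.symm)]
      omega
    · rw [Equiv.swap_apply_of_ne_of_ne hki hkc, if_neg hki.symm,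
        if_neg (Fin.val_injective.ne hkc)]
      omega

lemma coeff_youngExponent_add_single_of_lt (hpos : ∀ x ∈ J, 0 < x) (hmono : J.Pairwise (· ≥ ·))
    (hJ : J.sum = n + 1) (hq : J.length ≤ q) {i : Fin q} (hi : (i : ℕ) < J.length) :
    coeff (youngExponent q (n + 1) J + Finsupp.single i 1)
        ((∏ j, X j) * derivMulProdX^[n] (1 : MvPolynomial (Fin q) ℤ)) =
      coeff (youngExponent q n (YoungStep J (cornerRow J i))) (derivMulProdX^[n] 1) := by
  rw [coeff_prod_X_mul, if_pos (one_le_youngExponent_add_single hpos hJ hi),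
    youngExponent_add_single_sub (c := ⟨_, (cornerRow_lt_length hi).trans_le hq⟩) hpos hmono hJ
      hi rfl, coeff_equivMapDomain_derivMulProdX_iterate]

lemma coeff_youngExponent_add_single_of_le {i : Fin q} (hi : J.length ≤ i) :
    coeff (youngExponent q (n + 1) J + Finsupp.single i 1)
      ((∏ j, X j) * derivMulProdX^[n] (1 : MvPolynomial (Fin q) ℤ)) = 0 := by
  refine coeff_prod_X_mul_eq_zero (i := i) (fun _ => coeff_derivMulProdX_iterate_eq_zero n) ?_
  rw [Finsupp.add_apply, youngExponent_apply, List.getD_eq_default _ _ hi]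
  simp

theorem coeff_youngExponent_derivMulProdX_iterate (hpos : ∀ x ∈ J, 0 < x)
    (hmono : J.Pairwise (· ≥ ·)) (hq : J.length ≤ q) :
    coeff (youngExponent q J.sum J) (derivMulProdX^[J.sum] (1 : MvPolynomial (Fin q) ℤ)) =
      youngD J := by
  generalize hn : J.sum = n
  induction n generalizing J with
  | zero =>
    obtain rfl : J = [] := List.eq_nil_iff_forall_not_mem.2 fun x hx =>
      (hpos x hx).ne' (List.sum_eq_zero_iff.1 hn x hx)
    rw [show youngExponent q 0 [] = 0 by ext; simp [youngExponent_apply]]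
    simp [youngD, dAux]
  | succ n ih =>
    set F : ℕ → ℤ := fun s => ((n : ℤ) + 2 - J.getD s 0) * youngD (YoungStep J s)
    have hterm (i : Fin q) :
        coeff (youngExponent q (n + 1) J + Finsupp.single i 1)
            ((∏ j, X j) * derivMulProdX^[n] 1) * ((youngExponent q (n + 1) J i : ℤ) + 1) =
          if (i : ℕ) < J.length then F (cornerRow J i) else 0 := by
      split_ifs with hi
      · have hcorner := cornerRow_mem_corners hpos hmono hi
        have := getD_le_sum J i
        rw [coeff_youngExponent_add_single_of_lt hpos hmono hn hq hi,
          ih youngStep_pos (youngStep_pairwise hmono hcorner) (youngStep_length_le.trans hq)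
            (by have := youngStep_sum hpos (mem_corners.1 hcorner).1; omega),
          youngExponent_apply]
        simp only [F, getD_cornerRow hi]
        push_cast [Nat.cast_sub (hn ▸ this)]
        ring
      · rw [coeff_youngExponent_add_single_of_le (not_lt.1 hi), zero_mul]
    rw [Function.iterate_succ_apply', coeff_derivMulProdX, sum_congr rfl fun i _ => hterm i,
      Fin.sum_univ_eq_sum_range (fun i => if i < J.length then F (cornerRow J i) else 0),
      ← sum_filter, show (range q).filter (· < J.length) = range J.length by ext; simp; omega,
      sum_range_length_comp_cornerRow hpos hmono,
      youngD_eq_sum_corners hpos (by rintro rfl; simp at hn)]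
    refine sum_congr rfl fun s _ => ?_
    simp only [F, hn, nsmul_eq_mul]
    push_cast
    ring

end YoungExponent

theorem coeff_word_eq_youngD_general (p n : ℕ)
    (D : Derivation ℤ (MvPolynomial (Fin (p - 1)) ℤ) (MvPolynomial (Fin (p - 1)) ℤ))
    (hD : ∀ i : Fin (p - 1), D (MvPolynomial.X i) = 1)
    (J : List ℕ) (hpos : ∀ x ∈ J, 0 < x) (hmono : List.Pairwise (· ≥ ·) J)
    (hN : J.sum = n) (hm : J.length ≤ p - 1) :
    MvPolynomial.coeff
        (Finsupp.equivFunOnFinite.symm fun i : Fin (p - 1) => n - J.getD i.val 0)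
        ((fun g : MvPolynomial (Fin (p - 1)) ℤ =>
            D ((∏ i : Fin (p - 1), MvPolynomial.X i) * g))^[n] 1)
      = youngD J := by
  have hS : (fun g => D ((∏ i : Fin (p - 1), X i) * g)) = derivMulProdX :=
    funext fun g => derivation_eq_sum_pderiv hD _
  subst hN
  rw [hS]
  exact coeff_youngExponent_derivMulProdX_iterate hpos hmono hm

theorem coeff_word_eq_youngD (p n : ℕ) (hp : p.Prime) (hn1 : 1 ≤ n) (hn2 : n ≤ p - 1)
    (D : Derivation ℤ (MvPolynomial (Fin (p - 1)) ℤ) (MvPolynomial (Fin (p - 1)) ℤ))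
    (hD : ∀ i : Fin (p - 1), D (MvPolynomial.X i) = 1)
    (J : List ℕ) (hpos : ∀ x ∈ J, 0 < x) (hmono : List.Pairwise (· ≥ ·) J)
    (hN : J.sum = n) (hm : J.length ≤ p - 1) :
    MvPolynomial.coeff
        (Finsupp.equivFunOnFinite.symm fun i : Fin (p - 1) => n - J.getD i.val 0)
        ((fun g : MvPolynomial (Fin (p - 1)) ℤ =>
            D ((∏ i : Fin (p - 1), MvPolynomial.X i) * g))^[n] 1)
      = youngD J :=
  coeff_word_eq_youngD_general p n D hD J hpos hmono hN hm
end
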